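/- Let A, B, B', C ∈ ℂ^{r×r} with C + nI invertible for all integers n ≥ 0 and |x| < 1, |y| < 1, and let s be a non-negative integer. (i) If B + kI is invertible for all integers k ≥ 0, then F₁(A, B+sI, B'; C; x, y) = F₁(A, B, B'; C; x, y) + x·A·[∑_{k=1}^{s} F₁(A+I, B+kI, B'; C+I; x, y)]·C⁻¹. (ii) If B' + kI is invertible for all integers k ≥ 0, then F₁(A, B, B'+sI; C; x, y) = F₁(A, B, B'; C; x, y) + y·A·[∑_{k=1}^{s} F₁(A+I, B, B'+kI; C+I; x, y)]·C⁻¹. (iii) If B − kI is invertible for all integers 1 ≤ k ≤ s, then F₁(A, B−sI, B'; C; x, y) = F₁(A, B, B'; C; x, y) − x·A·[∑_{k=0}^{s−1} F₁(A+I, B−kI, B'; C+I; x, y)]·C⁻¹. (iv) If B' − kI is invertible for all integers 1 ≤ k ≤ s, then F₁(A, B, B'−sI; C; x, y) = F₁(A, B, B'; C; x, y) − y·A·[∑_{k=0}^{s−1} F₁(A+I, B, B'−kI; C+I; x, y)]·C⁻¹. -/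

import Mathlib

/-- The shifted factorial (Pochhammer) matrix: `(A)_0 = I`, `(A)_{n+1} = (A)_n (A + nI)`. -/
noncomputable def mPoch {r : ℕ} (A : Matrix (Fin r) (Fin r) ℂ) : ℕ → Matrix (Fin r) (Fin r) ℂ
  | 0 => 1
  | n + 1 => mPoch A n * (A + (n : ℂ) • 1)

/-- The first Appell matrix function `F₁(A, B, B'; C; x, y)`. -/
noncomputable def appellF1 {r : ℕ} (A B B' C : Matrix (Fin r) (Fin r) ℂ) (x y : ℂ) :
    Matrix (Fin r) (Fin r) ℂ :=
  ∑' p : ℕ × ℕ,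
    (((p.1.factorial : ℂ) * (p.2.factorial : ℂ))⁻¹ * x ^ p.1 * y ^ p.2) •
      (mPoch A (p.1 + p.2) * mPoch B p.1 * mPoch B' p.2 * (mPoch C (p.1 + p.2))⁻¹)


/-!
Since `(B + 1)_{m+1} - (B)_{m+1} = (m + 1) (B + 1)_m`, `(A)_{k+1} = A (A + 1)_k` and
`((C)_{k+1})⁻¹ = ((C + 1)_k)⁻¹ C⁻¹`, the terms of `F₁(A, B + 1, B'; C) - F₁(A, B, B'; C)` vanish for
`m = 0` and are those of `x A F₁(A + 1, B + 1, B'; C + 1) C⁻¹` shifted by `m ↦ m + 1`; the same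
holds in `B'` with `y`. Telescoping this contiguous relation upward from `B` or downward from
`B - sI` gives the four formulas. The rearrangements are justified by absolute convergence for
`|x|, |y| < 1`: the ratios `‖A + jI‖ ‖(C + jI)⁻¹‖` and `‖B + jI‖ / (j + 1)` are eventually bounded
by quantities tending to `1`, so the ratio test applies to each factor of a majorant.
-/

open Finset Filter Topology

section Telescope

variable {R V M : Type*} [Ring R] [AddCommGroup V] [Module R V] [AddCommGroup M]
  {Φ Ψ : V → M} {u : V}

theorem apply_add_natCast_smul_eq (h : ∀ v, Φ (v + u) = Φ v + Ψ (v + u)) (v : V) (s : ℕ) :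
    Φ (v + (s : R) • u) = Φ v + ∑ k ∈ Icc 1 s, Ψ (v + (k : R) • u) := by
  induction s with
  | zero => simp
  | succ s ih =>
    have hv : v + ((s + 1 : ℕ) : R) • u = v + (s : R) • u + u := by
      rw [Nat.cast_succ, add_smul, one_smul, add_assoc]
    rw [hv, h, ih, sum_Icc_succ_top (Nat.le_add_left 1 s), ← hv, add_assoc]

theorem apply_sub_natCast_smul_eq (h : ∀ v, Φ (v + u) = Φ v + Ψ (v + u)) (v : V) (s : ℕ) :
    Φ (v - (s : R) • u) = Φ v - ∑ k ∈ range s, Ψ (v - (k : R) • u) := by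
  induction s with
  | zero => simp
  | succ s ih =>
    have hv : v - ((s + 1 : ℕ) : R) • u + u = v - (s : R) • u := by
      rw [Nat.cast_succ, add_smul, one_smul]; abel
    have hstep := h (v - ((s + 1 : ℕ) : R) • u)
    rw [hv, ih] at hstep
    rw [sum_range_succ, eq_sub_of_add_eq hstep.symm, sub_sub]

end Telescope

theorem tsum_eq_tsum_add_tsum_of_injective {α β M : Type*} [AddCommGroup M] [TopologicalSpace M]
    [IsTopologicalAddGroup M] [T2Space M] {f g : α → M} {h : β → M} {e : β → α}
    (he : Function.Injective e) (hf : Summable f) (hg : Summable g)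
    (hfg : ∀ a ∉ Set.range e, f a = g a) (hfgh : ∀ b, f (e b) - g (e b) = h b) :
    ∑' a, f a = ∑' a, g a + ∑' b, h b := by
  rw [← sub_eq_iff_eq_add', ← hf.tsum_sub hg,
    ← he.tsum_eq (Function.support_subset_iff'.2 fun a ha => sub_eq_zero.2 (hfg a ha))]
  exact tsum_congr hfgh

theorem tendsto_natCast_add_div_natCast_add (a b : ℝ) :
    Tendsto (fun k : ℕ => ((k : ℝ) + a) / (k + b)) atTop (𝓝 1) := by
  simpa [add_div] using (tendsto_natCast_div_add_atTop b).add
    (tendsto_const_nhds.div_atTop (tendsto_atTop_add_const_right _ b tendsto_natCast_atTop_atTop))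

theorem summable_prod_range_mul_pow {q u : ℕ → ℝ} (hq : ∀ j, 0 ≤ q j)
    (hqu : ∀ᶠ j in atTop, q j ≤ u j) (hu : Tendsto u atTop (𝓝 1)) {σ : ℝ} (hσ0 : 0 ≤ σ)
    (hσ1 : σ < 1) :
    Summable fun k => (∏ j ∈ range k, q j) * σ ^ k := by
  obtain ⟨ρ, hσρ, hρ1⟩ := exists_between hσ1
  have hσu : Tendsto (fun j => σ * u j) atTop (𝓝 σ) := by simpa using hu.const_mul σ
  have hnn (k : ℕ) : 0 ≤ (∏ j ∈ range k, q j) * σ ^ k :=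
    mul_nonneg (prod_nonneg fun j _ => hq j) (pow_nonneg hσ0 k)
  refine summable_of_ratio_norm_eventually_le hρ1 ?_
  filter_upwards [hqu, hσu.eventually (gt_mem_nhds hσρ)] with k hk hk'
  rw [Real.norm_of_nonneg (hnn _), Real.norm_of_nonneg (hnn _), prod_range_succ, pow_succ]
  calc (∏ j ∈ range k, q j) * q k * (σ ^ k * σ)
      = ((∏ j ∈ range k, q j) * σ ^ k) * (σ * q k) := by ring
    _ ≤ ((∏ j ∈ range k, q j) * σ ^ k) * ρ :=
        mul_le_mul_of_nonneg_left ((mul_le_mul_of_nonneg_left hk hσ0).trans hk'.le) (hnn k)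
    _ = ρ * ((∏ j ∈ range k, q j) * σ ^ k) := mul_comm _ _

section Pochhammer

variable {r : ℕ}

theorem mPoch_succ (A : Matrix (Fin r) (Fin r) ℂ) (n : ℕ) :
    mPoch A (n + 1) = mPoch A n * (A + (n : ℂ) • 1) := rfl

theorem Commute.mPoch_right {X Y : Matrix (Fin r) (Fin r) ℂ} (h : Commute X Y) (n : ℕ) :
    Commute X (mPoch Y n) := by
  induction n with
  | zero => exact Commute.one_right X
  | succ n ih => exact ih.mul_right (h.add_right ((Commute.one_right X).smul_right _))

theorem add_one_add_natCast_smul_one (A : Matrix (Fin r) (Fin r) ℂ) (n : ℕ) :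
    A + 1 + (n : ℂ) • 1 = A + ((n + 1 : ℕ) : ℂ) • 1 := by
  rw [Nat.cast_succ, add_smul, one_smul]; abel

theorem mPoch_succ_eq_mul_mPoch_add_one (A : Matrix (Fin r) (Fin r) ℂ) (n : ℕ) :
    mPoch A (n + 1) = A * mPoch (A + 1) n := by
  induction n with
  | zero => simp [mPoch]
  | succ n ih => rw [mPoch_succ, ih, mPoch_succ, mul_assoc, add_one_add_natCast_smul_one]

theorem mPoch_add_one_succ_sub (B : Matrix (Fin r) (Fin r) ℂ) (n : ℕ) :
    mPoch (B + 1) (n + 1) - mPoch B (n + 1) = ((n : ℂ) + 1) • mPoch (B + 1) n := by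
  have hB : Commute B (mPoch (B + 1) n) :=
    ((Commute.refl B).add_right (Commute.one_right B)).mPoch_right n
  rw [mPoch_succ, add_one_add_natCast_smul_one, mPoch_succ_eq_mul_mPoch_add_one, hB.eq,
    ← mul_sub, add_sub_cancel_left, mul_smul_comm, mul_one, Nat.cast_succ]

theorem inv_mPoch_succ (C : Matrix (Fin r) (Fin r) ℂ) (n : ℕ) :
    (mPoch C (n + 1))⁻¹ = (mPoch (C + 1) n)⁻¹ * C⁻¹ := by
  rw [mPoch_succ_eq_mul_mPoch_add_one, Matrix.mul_inv_rev]

end Pochhammer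

section Term

variable {r : ℕ}

noncomputable def appellF1Term (A B B' C : Matrix (Fin r) (Fin r) ℂ) (x y : ℂ) (p : ℕ × ℕ) :
    Matrix (Fin r) (Fin r) ℂ :=
  (((p.1.factorial : ℂ) * (p.2.factorial : ℂ))⁻¹ * x ^ p.1 * y ^ p.2) •
    (mPoch A (p.1 + p.2) * mPoch B p.1 * mPoch B' p.2 * (mPoch C (p.1 + p.2))⁻¹)

theorem appellF1_eq_tsum (A B B' C : Matrix (Fin r) (Fin r) ℂ) (x y : ℂ) :
    appellF1 A B B' C x y = ∑' p, appellF1Term A B B' C x y p := rfl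

theorem natCast_add_one_mul_inv_factorial_succ (m : ℕ) :
    ((m : ℂ) + 1) * ((m + 1).factorial : ℂ)⁻¹ = (m.factorial : ℂ)⁻¹ := by
  rw [Nat.factorial_succ, Nat.cast_mul, Nat.cast_succ, mul_inv, ← mul_assoc,
    mul_inv_cancel₀ (Nat.cast_add_one_ne_zero m), one_mul]

variable (A B B' C : Matrix (Fin r) (Fin r) ℂ) (x y : ℂ) (m n : ℕ)

theorem appellF1Term_add_one_left_sub :
    appellF1Term A (B + 1) B' C x y (m + 1, n) - appellF1Term A B B' C x y (m + 1, n) =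
      x • (A * appellF1Term (A + 1) (B + 1) B' (C + 1) x y (m, n) * C⁻¹) := by
  simp only [appellF1Term]
  rw [← smul_sub, ← sub_mul, ← sub_mul, ← mul_sub, mPoch_add_one_succ_sub, Nat.add_right_comm,
    mPoch_succ_eq_mul_mPoch_add_one, inv_mPoch_succ]
  simp only [smul_mul_assoc, mul_smul_comm, smul_smul, mul_assoc]
  congr 1
  rw [mul_inv, mul_inv, ← natCast_add_one_mul_inv_factorial_succ m]
  ring

theorem appellF1Term_add_one_right_sub :
    appellF1Term A B (B' + 1) C x y (m, n + 1) - appellF1Term A B B' C x y (m, n + 1) =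
      y • (A * appellF1Term (A + 1) B (B' + 1) (C + 1) x y (m, n) * C⁻¹) := by
  simp only [appellF1Term]
  rw [← smul_sub, ← sub_mul, ← mul_sub, mPoch_add_one_succ_sub, ← Nat.add_assoc,
    mPoch_succ_eq_mul_mPoch_add_one, inv_mPoch_succ]
  simp only [smul_mul_assoc, mul_smul_comm, smul_smul, mul_assoc]
  congr 1
  rw [mul_inv, mul_inv, ← natCast_add_one_mul_inv_factorial_succ n]
  ring

end Term

section Norms

attribute [local instance] Matrix.linftyOpNormedRing Matrix.linftyOpNormedAlgebra

variable {r : ℕ}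

theorem linfty_opNorm_one_le : ‖(1 : Matrix (Fin r) (Fin r) ℂ)‖ ≤ 1 := by
  rw [← Matrix.diagonal_one, Matrix.linfty_opNorm_diagonal]
  exact (pi_norm_le_iff_of_nonneg zero_le_one).mpr fun i => by simp

theorem norm_add_natCast_smul_one_le (A : Matrix (Fin r) (Fin r) ℂ) (j : ℕ) :
    ‖A + (j : ℂ) • 1‖ ≤ j + ‖A‖ := by
  rw [add_comm (j : ℝ)]
  refine (norm_add_le _ _).trans (add_le_add_right ?_ _)
  rw [norm_smul, Complex.norm_natCast]
  exact mul_le_of_le_one_right (Nat.cast_nonneg j) linfty_opNorm_one_le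

theorem norm_mPoch_le (A : Matrix (Fin r) (Fin r) ℂ) (k : ℕ) :
    ‖mPoch A k‖ ≤ ∏ j ∈ range k, ‖A + (j : ℂ) • 1‖ := by
  induction k with
  | zero => exact linfty_opNorm_one_le
  | succ k ih =>
    rw [mPoch_succ, prod_range_succ]
    exact (norm_mul_le _ _).trans (by gcongr)

theorem norm_inv_mPoch_le (C : Matrix (Fin r) (Fin r) ℂ) (k : ℕ) :
    ‖(mPoch C k)⁻¹‖ ≤ ∏ j ∈ range k, ‖(C + (j : ℂ) • 1)⁻¹‖ := by
  induction k with
  | zero => simpa [mPoch] using linfty_opNorm_one_le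
  | succ k ih =>
    rw [mPoch_succ, Matrix.mul_inv_rev, prod_range_succ, mul_comm (∏ j ∈ range k, _)]
    exact (norm_mul_le _ _).trans (by gcongr)

theorem norm_inv_add_natCast_smul_one_le (C : Matrix (Fin r) (Fin r) ℂ) {j : ℕ}
    (hj : ‖C‖ < j) : ‖(C + (j : ℂ) • 1)⁻¹‖ ≤ ((j : ℝ) - ‖C‖)⁻¹ := by
  have hpos : 0 < (j : ℝ) - ‖C‖ := sub_pos.2 hj
  by_cases hunit : IsUnit (C + (j : ℂ) • (1 : Matrix (Fin r) (Fin r) ℂ)).det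
  swap
  · rw [Matrix.nonsing_inv_apply_not_isUnit _ hunit, norm_zero]
    exact inv_nonneg.2 hpos.le
  set E := (C + (j : ℂ) • (1 : Matrix (Fin r) (Fin r) ℂ))⁻¹
  have hjE : (j : ℂ) • E = 1 - C * E := by
    have hmul := Matrix.mul_nonsing_inv _ hunit
    rw [add_mul, smul_mul_assoc, one_mul] at hmul
    exact eq_sub_of_add_eq' hmul
  have hbound : (j : ℝ) * ‖E‖ ≤ 1 + ‖C‖ * ‖E‖ := by
    have := norm_sub_le (1 : Matrix (Fin r) (Fin r) ℂ) (C * E)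
    rw [← hjE, norm_smul, Complex.norm_natCast] at this
    linarith [norm_mul_le C E, (linfty_opNorm_one_le : ‖(1 : Matrix (Fin r) (Fin r) ℂ)‖ ≤ 1)]
  rw [← one_div, le_div_iff₀ hpos]
  linarith

theorem summable_prod_norm_mul_norm_inv_mul_pow (A C : Matrix (Fin r) (Fin r) ℂ) {σ : ℝ}
    (hσ0 : 0 ≤ σ) (hσ1 : σ < 1) :
    Summable fun k => (∏ j ∈ range k, ‖A + (j : ℂ) • 1‖ * ‖(C + (j : ℂ) • 1)⁻¹‖) * σ ^ k := by
  refine summable_prod_range_mul_pow (fun j => by positivity) ?_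
    (tendsto_natCast_add_div_natCast_add ‖A‖ (-‖C‖)) hσ0 hσ1
  filter_upwards [tendsto_natCast_atTop_atTop.eventually_gt_atTop ‖C‖] with j hj
  rw [← sub_eq_add_neg, div_eq_mul_inv]
  exact mul_le_mul (norm_add_natCast_smul_one_le A j) (norm_inv_add_natCast_smul_one_le C hj)
    (norm_nonneg _) (by positivity)

theorem summable_prod_norm_div_mul_pow (B : Matrix (Fin r) (Fin r) ℂ) {σ : ℝ} (hσ0 : 0 ≤ σ)
    (hσ1 : σ < 1) :
    Summable fun m => (∏ j ∈ range m, ‖B + (j : ℂ) • 1‖ / (j + 1)) * σ ^ m := by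
  refine summable_prod_range_mul_pow (fun j => by positivity) (Eventually.of_forall fun j => ?_)
    (tendsto_natCast_add_div_natCast_add ‖B‖ 1) hσ0 hσ1
  exact div_le_div_of_nonneg_right (norm_add_natCast_smul_one_le B j) (by positivity)

theorem norm_appellF1Term_le (A B B' C : Matrix (Fin r) (Fin r) ℂ) (x y : ℂ) (m n : ℕ) :
    ‖appellF1Term A B B' C x y (m, n)‖ ≤
      (∏ j ∈ range (m + n), ‖A + (j : ℂ) • 1‖ * ‖(C + (j : ℂ) • 1)⁻¹‖) *
        ((∏ j ∈ range m, ‖B + (j : ℂ) • 1‖ / (j + 1)) * ‖x‖ ^ m) *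
        ((∏ j ∈ range n, ‖B' + (j : ℂ) • 1‖ / (j + 1)) * ‖y‖ ^ n) := by
  have hfact (k : ℕ) : ∏ j ∈ range k, ((j : ℝ) + 1) = k.factorial := by
    exact_mod_cast prod_range_add_one_eq_factorial k
  calc ‖appellF1Term A B B' C x y (m, n)‖
      ≤ ‖((m.factorial : ℂ) * (n.factorial : ℂ))⁻¹ * x ^ m * y ^ n‖ *
          (‖mPoch A (m + n)‖ * ‖mPoch B m‖ * ‖mPoch B' n‖ * ‖(mPoch C (m + n))⁻¹‖) := by
        rw [appellF1Term, norm_smul]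
        gcongr
        exact (norm_mul_le _ _).trans (by gcongr; exact norm_mul₃_le)
    _ ≤ ‖((m.factorial : ℂ) * (n.factorial : ℂ))⁻¹ * x ^ m * y ^ n‖ *
          ((∏ j ∈ range (m + n), ‖A + (j : ℂ) • 1‖) * (∏ j ∈ range m, ‖B + (j : ℂ) • 1‖) *
            (∏ j ∈ range n, ‖B' + (j : ℂ) • 1‖) * ∏ j ∈ range (m + n), ‖(C + (j : ℂ) • 1)⁻¹‖) := by
        gcongr
        exacts [norm_mPoch_le A _, norm_mPoch_le B _, norm_mPoch_le B' _, norm_inv_mPoch_le C _]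
    _ = _ := by
        rw [prod_mul_distrib, prod_div_distrib, prod_div_distrib, hfact, hfact]
        simp only [norm_mul, norm_inv, norm_pow, Complex.norm_natCast]
        ring

theorem summable_appellF1Term (A B B' C : Matrix (Fin r) (Fin r) ℂ) {x y : ℂ} (hx : ‖x‖ < 1)
    (hy : ‖y‖ < 1) : Summable (appellF1Term A B B' C x y) := by
  obtain ⟨σ, hσ, hσ1⟩ := exists_between (max_lt hx hy)
  have hσ0 : 0 < σ := (norm_nonneg x).trans_lt ((le_max_left _ _).trans_lt hσ)
  have hxσ : ‖x‖ / σ < 1 := (div_lt_one hσ0).2 ((le_max_left _ _).trans_lt hσ)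
  have hyσ : ‖y‖ / σ < 1 := (div_lt_one hσ0).2 ((le_max_right _ _).trans_lt hσ)
  set P := fun k => (∏ j ∈ range k, ‖A + (j : ℂ) • 1‖ * ‖(C + (j : ℂ) • 1)⁻¹‖) * σ ^ k
  have hP : Summable P := summable_prod_norm_mul_norm_inv_mul_pow A C hσ0.le hσ1
  -- with `‖x‖ ^ m * ‖y‖ ^ n = σ ^ (m + n) * (‖x‖ / σ) ^ m * (‖y‖ / σ) ^ n`, the factor coupling
  -- `m` and `n` becomes `P (m + n) ≤ ∑' k, P k`, and what is left is a product of series in `m`, `n`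
  have hQ := (summable_prod_norm_div_mul_pow B (by positivity) hxσ).mul_of_nonneg
    (summable_prod_norm_div_mul_pow B' (by positivity) hyσ)
    (fun _ => by positivity) (fun _ => by positivity)
  refine .of_norm_bounded (hQ.mul_left (∑' k, P k)) fun ⟨m, n⟩ =>
    (norm_appellF1Term_le A B B' C x y m n).trans ?_
  calc _ = P (m + n) * (((∏ j ∈ range m, ‖B + (j : ℂ) • 1‖ / (j + 1)) * (‖x‖ / σ) ^ m) *
        ((∏ j ∈ range n, ‖B' + (j : ℂ) • 1‖ / (j + 1)) * (‖y‖ / σ) ^ n)) := by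
        simp only [P, div_pow, pow_add]
        field_simp
    _ ≤ _ := mul_le_mul_of_nonneg_right (hP.le_tsum _ fun _ _ => by positivity) (by positivity)

end Norms

section Contiguous

variable {r : ℕ} (A B B' C : Matrix (Fin r) (Fin r) ℂ) {x y : ℂ}

theorem appellF1_add_one_left (hx : ‖x‖ < 1) (hy : ‖y‖ < 1) :
    appellF1 A (B + 1) B' C x y =
      appellF1 A B B' C x y + x • (A * appellF1 (A + 1) (B + 1) B' (C + 1) x y * C⁻¹) := by
  have hT := summable_appellF1Term (A + 1) (B + 1) B' (C + 1) hx hy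
  rw [appellF1_eq_tsum, appellF1_eq_tsum, appellF1_eq_tsum, ← hT.tsum_mul_left A,
    ← (hT.mul_left A).tsum_mul_right C⁻¹, ← ((hT.mul_left A).mul_right C⁻¹).tsum_const_smul x]
  refine tsum_eq_tsum_add_tsum_of_injective ((add_left_injective 1).prodMap Function.injective_id)
    (summable_appellF1Term _ _ _ _ hx hy) (summable_appellF1Term _ _ _ _ hx hy) ?_
    fun ⟨m, n⟩ => appellF1Term_add_one_left_sub A B B' C x y m n
  rintro ⟨_ | m, n⟩ hmn
  · simp [appellF1Term, mPoch]
  · exact absurd ⟨(m, n), rfl⟩ hmn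

theorem appellF1_add_one_right (hx : ‖x‖ < 1) (hy : ‖y‖ < 1) :
    appellF1 A B (B' + 1) C x y =
      appellF1 A B B' C x y + y • (A * appellF1 (A + 1) B (B' + 1) (C + 1) x y * C⁻¹) := by
  have hT := summable_appellF1Term (A + 1) B (B' + 1) (C + 1) hx hy
  rw [appellF1_eq_tsum, appellF1_eq_tsum, appellF1_eq_tsum, ← hT.tsum_mul_left A,
    ← (hT.mul_left A).tsum_mul_right C⁻¹, ← ((hT.mul_left A).mul_right C⁻¹).tsum_const_smul y]
  refine tsum_eq_tsum_add_tsum_of_injective (Function.injective_id.prodMap (add_left_injective 1))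
    (summable_appellF1Term _ _ _ _ hx hy) (summable_appellF1Term _ _ _ _ hx hy) ?_
    fun ⟨m, n⟩ => appellF1Term_add_one_right_sub A B B' C x y m n
  rintro ⟨m, _ | n⟩ hmn
  · simp [appellF1Term, mPoch]
  · exact absurd ⟨(m, n), rfl⟩ hmn

end Contiguous

theorem appellF1_recursion_B_general {r : ℕ} (A B B' C : Matrix (Fin r) (Fin r) ℂ) (x y : ℂ) (s : ℕ)
    (hx : ‖x‖ < 1) (hy : ‖y‖ < 1) :
    ((∀ k : ℕ, IsUnit (B + (k : ℂ) • (1 : Matrix (Fin r) (Fin r) ℂ))) →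
      appellF1 A (B + (s : ℂ) • 1) B' C x y =
        appellF1 A B B' C x y +
          x • (A * (∑ k ∈ Finset.Icc 1 s,
            appellF1 (A + 1) (B + (k : ℂ) • 1) B' (C + 1) x y) * C⁻¹)) ∧
    ((∀ k : ℕ, IsUnit (B' + (k : ℂ) • (1 : Matrix (Fin r) (Fin r) ℂ))) →
      appellF1 A B (B' + (s : ℂ) • 1) C x y =
        appellF1 A B B' C x y +
          y • (A * (∑ k ∈ Finset.Icc 1 s,
            appellF1 (A + 1) B (B' + (k : ℂ) • 1) (C + 1) x y) * C⁻¹)) ∧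
    ((∀ k : ℕ, 1 ≤ k → k ≤ s → IsUnit (B - (k : ℂ) • (1 : Matrix (Fin r) (Fin r) ℂ))) →
      appellF1 A (B - (s : ℂ) • 1) B' C x y =
        appellF1 A B B' C x y -
          x • (A * (∑ k ∈ Finset.range s,
            appellF1 (A + 1) (B - (k : ℂ) • 1) B' (C + 1) x y) * C⁻¹)) ∧
    ((∀ k : ℕ, 1 ≤ k → k ≤ s → IsUnit (B' - (k : ℂ) • (1 : Matrix (Fin r) (Fin r) ℂ))) →
      appellF1 A B (B' - (s : ℂ) • 1) C x y =
        appellF1 A B B' C x y -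
          y • (A * (∑ k ∈ Finset.range s,
            appellF1 (A + 1) B (B' - (k : ℂ) • 1) (C + 1) x y) * C⁻¹)) := by
  have stepB := fun X => appellF1_add_one_left A X B' C hx hy
  have stepB' := fun X => appellF1_add_one_right A B X C hx hy
  simp only [Finset.mul_sum, Finset.sum_mul, Finset.smul_sum]
  refine ⟨fun _ => ?_, fun _ => ?_, fun _ => ?_, fun _ => ?_⟩
  · exact apply_add_natCast_smul_eq (Φ := fun X => appellF1 A X B' C x y)
      (Ψ := fun X => x • (A * appellF1 (A + 1) X B' (C + 1) x y * C⁻¹)) stepB B s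
  · exact apply_add_natCast_smul_eq (Φ := fun X => appellF1 A B X C x y)
      (Ψ := fun X => y • (A * appellF1 (A + 1) B X (C + 1) x y * C⁻¹)) stepB' B' s
  · exact apply_sub_natCast_smul_eq (Φ := fun X => appellF1 A X B' C x y)
      (Ψ := fun X => x • (A * appellF1 (A + 1) X B' (C + 1) x y * C⁻¹)) stepB B s
  · exact apply_sub_natCast_smul_eq (Φ := fun X => appellF1 A B X C x y)
      (Ψ := fun X => y • (A * appellF1 (A + 1) B X (C + 1) x y * C⁻¹)) stepB' B' s

theorem appellF1_recursion_B {r : ℕ} (A B B' C : Matrix (Fin r) (Fin r) ℂ) (x y : ℂ) (s : ℕ)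
    (hC : ∀ n : ℕ, IsUnit (C + (n : ℂ) • (1 : Matrix (Fin r) (Fin r) ℂ)))
    (hx : ‖x‖ < 1) (hy : ‖y‖ < 1) :
    ((∀ k : ℕ, IsUnit (B + (k : ℂ) • (1 : Matrix (Fin r) (Fin r) ℂ))) →
      appellF1 A (B + (s : ℂ) • 1) B' C x y =
        appellF1 A B B' C x y +
          x • (A * (∑ k ∈ Finset.Icc 1 s,
            appellF1 (A + 1) (B + (k : ℂ) • 1) B' (C + 1) x y) * C⁻¹)) ∧
    ((∀ k : ℕ, IsUnit (B' + (k : ℂ) • (1 : Matrix (Fin r) (Fin r) ℂ))) →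
      appellF1 A B (B' + (s : ℂ) • 1) C x y =
        appellF1 A B B' C x y +
          y • (A * (∑ k ∈ Finset.Icc 1 s,
            appellF1 (A + 1) B (B' + (k : ℂ) • 1) (C + 1) x y) * C⁻¹)) ∧
    ((∀ k : ℕ, 1 ≤ k → k ≤ s → IsUnit (B - (k : ℂ) • (1 : Matrix (Fin r) (Fin r) ℂ))) →
      appellF1 A (B - (s : ℂ) • 1) B' C x y =
        appellF1 A B B' C x y -
          x • (A * (∑ k ∈ Finset.range s,
            appellF1 (A + 1) (B - (k : ℂ) • 1) B' (C + 1) x y) * C⁻¹)) ∧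
    ((∀ k : ℕ, 1 ≤ k → k ≤ s → IsUnit (B' - (k : ℂ) • (1 : Matrix (Fin r) (Fin r) ℂ))) →
      appellF1 A B (B' - (s : ℂ) • 1) C x y =
        appellF1 A B B' C x y -
          y • (A * (∑ k ∈ Finset.range s,
            appellF1 (A + 1) B (B' - (k : ℂ) • 1) (C + 1) x y) * C⁻¹)) :=
  appellF1_recursion_B_general A B B' C x y s hx hy
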